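/- Let n ≥ 1 and let F be an upset of a De Morgan lattice L. Then F is a consistent prime n-filter on L if and only if there exists a homomorphism of De Morgan lattices h : L → (Fin n → Bool × Bool) such that (h x i).1 = true implies (h x i).2 = true for all x ∈ L and i : Fin n (i.e., h takes values in the subalgebra Kₙ of DMₙ), and F = {x : ∃ i, (h x i).1 = true}. -/

import Mathlib

/-- A De Morgan lattice: a distributive lattice with an antitone involution. -/
class DeMorgan (L : Type*) extends DistribLattice L where
  dneg : L → L
  dneg_dneg : ∀ x : L, dneg (dneg x) = x
  dneg_sup : ∀ x y : L, dneg (x ⊔ y) = dneg x ⊓ dneg y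

prefix:max "∼" => DeMorgan.dneg

section Defs

variable {α : Type*}

/-- An upward closed subset of a lattice. -/
def IsUpset [Lattice α] (F : Set α) : Prop :=
  ∀ ⦃x y : α⦄, x ∈ F → x ≤ y → y ∈ F

/-- A lattice filter: an upset closed under binary meets. -/
def IsLatFilter [Lattice α] (F : Set α) : Prop :=
  IsUpset F ∧ ∀ x y : α, x ∈ F → y ∈ F → x ⊓ y ∈ F

/-- An `n`-filter: an upset such that for every nonempty finite `Y`, if the meet of
every nonempty subset of `Y` of size at most `n` lies in `F`, then so does the meet of `Y`. -/
def IsNFilter [Lattice α] (n : ℕ) (F : Set α) : Prop :=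
  IsUpset F ∧ ∀ (Y : Finset α) (hY : Y.Nonempty),
    (∀ (X : Finset α) (hX : X.Nonempty), X ⊆ Y → X.card ≤ n → X.inf' hX id ∈ F) →
    Y.inf' hY id ∈ F

/-- A prime upset: `x ⊔ y ∈ F` implies `x ∈ F` or `y ∈ F`. -/
def IsPrimeUpset [Lattice α] (F : Set α) : Prop :=
  ∀ x y : α, x ⊔ y ∈ F → x ∈ F ∨ y ∈ F

/-- A downward closed subset of a lattice. -/
def IsDownset [Lattice α] (I : Set α) : Prop :=
  ∀ ⦃x y : α⦄, x ∈ I → y ≤ x → y ∈ I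

/-- A lattice ideal: a downset closed under binary joins. -/
def IsIdeal [Lattice α] (I : Set α) : Prop :=
  IsDownset I ∧ ∀ x y : α, x ∈ I → y ∈ I → x ⊔ y ∈ I

/-- An `n`-ideal: the order dual notion of an `n`-filter. -/
def IsNIdeal [Lattice α] (n : ℕ) (I : Set α) : Prop :=
  IsDownset I ∧ ∀ (Y : Finset α) (hY : Y.Nonempty),
    (∀ (X : Finset α) (hX : X.Nonempty), X ⊆ Y → X.card ≤ n → X.sup' hX id ∈ I) →
    Y.sup' hY id ∈ I

variable {L : Type*} [DeMorgan L]

/-- Almost complete upset: `x ∈ F` implies `x ⊓ (y ⊔ ∼y) ∈ F`. -/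
def AlmostComplete (F : Set L) : Prop := ∀ x ∈ F, ∀ y : L, x ⊓ (y ⊔ ∼y) ∈ F

/-- Complete upset: almost complete and nonempty. -/
def IsCompleteUpset (F : Set L) : Prop := AlmostComplete F ∧ F.Nonempty

/-- Almost consistent upset: `(x ⊓ ∼x) ⊔ y ∈ F` implies `y ∈ F`. -/
def AlmostConsistent (F : Set L) : Prop := ∀ x y : L, (x ⊓ ∼x) ⊔ y ∈ F → y ∈ F

/-- Consistent upset: almost consistent and not total. -/
def IsConsistentUpset (F : Set L) : Prop := AlmostConsistent F ∧ F ≠ Set.univ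

/-- Classical upset: complete and consistent. -/
def IsClassicalUpset (F : Set L) : Prop := IsCompleteUpset F ∧ IsConsistentUpset F

/-- Kalman upset. -/
def IsKalmanUpset (F : Set L) : Prop :=
  ∀ x y z u : L, ((x ⊓ ∼x) ⊓ z) ⊔ u ∈ F → ((y ⊔ ∼y) ⊓ z) ⊔ u ∈ F

/-- A homomorphism of De Morgan lattices. -/
def IsDMHom {L M : Type*} [DeMorgan L] [DeMorgan M] (h : L → M) : Prop :=
  (∀ x y : L, h (x ⊓ y) = h x ⊓ h y) ∧ (∀ x y : L, h (x ⊔ y) = h x ⊔ h y) ∧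
    ∀ x : L, h (∼x) = ∼(h x)

/-- The filter generated by all elements of the form `x ⊔ ∼x`. -/
def Fcomp (L : Type*) [DeMorgan L] : Set L :=
  {a | ∃ (s : Finset L) (hs : s.Nonempty), s.inf' hs (fun x => x ⊔ ∼x) ≤ a}

/-- The `n`-filter generated by a set. -/
def nFilterGen (n : ℕ) (U : Set L) : Set L :=
  ⋂₀ {F : Set L | IsNFilter n F ∧ U ⊆ F}

/-- `Comp U`. -/
def CompCl (U : Set L) : Set L := {x | ∃ a ∈ U, ∃ f ∈ Fcomp L, a ⊓ f ≤ x}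

/-- `Cons U`. -/
def ConsCl (U : Set L) : Set L := {x | ∃ f ∈ Fcomp L, ∼f ⊔ x ∈ U}

/-- A congruence of De Morgan lattices, as a binary relation. -/
def IsCongruence (θ : L → L → Prop) : Prop :=
  Equivalence θ ∧
  (∀ a b c d : L, θ a b → θ c d → θ (a ⊓ c) (b ⊓ d)) ∧
  (∀ a b c d : L, θ a b → θ c d → θ (a ⊔ c) (b ⊔ d)) ∧
  ∀ a b : L, θ a b → θ (∼a) (∼b)

end Defs

/-- The four-element De Morgan lattice `DM₁` on `Bool × Bool`. -/
instance : DeMorgan (Bool × Bool) :=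
  { (inferInstance : DistribLattice (Bool × Bool)) with
    dneg := fun p => (!p.2, !p.1)
    dneg_dneg := by decide
    dneg_sup := by decide }

/-- Powers of `DM₁`, with componentwise operations. -/
instance {ι : Type*} : DeMorgan (ι → Bool × Bool) :=
  { (inferInstance : DistribLattice (ι → Bool × Bool)) with
    dneg := fun f i => ∼(f i)
    dneg_dneg := fun f => funext fun i => DeMorgan.dneg_dneg (f i)
    dneg_sup := fun f g => funext fun i => DeMorgan.dneg_sup (f i) (g i) }


/-!
A prime filter `G` of a De Morgan lattice gives the homomorphism `x ↦ (x ∈ G, ∼x ∉ G)` to `DM₁`,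
which lands in `K₁` exactly when `G` never contains both `x` and `∼x`, and every homomorphism
into `K₁` arises this way. So the claim is that the consistent prime `n`-filters are the unions of
`n` such prime filters. A union of `n` filters is an `n`-filter. Conversely, the filters maximal
among those contained in a prime upset `F` are prime and cover `F`, and two distinct ones contain
elements whose meet leaves `F`. Were there `n + 1` of them, we would get `b₀, …, bₙ ∈ F` with
pairwise meets outside `F`; any `n` of the joins `⋁_{j ≠ i} b_j` lie above a common `b_k`, so
their meet is in `F` by the `n`-filter property, and primeness then puts some `b_j ⊓ b_k`,
`j ≠ k`, in `F`.
-/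

open Set

section Lattice

variable {α : Type*}

theorem isLatFilter_empty [Lattice α] : IsLatFilter (∅ : Set α) :=
  ⟨fun _ _ h => h.elim, fun _ _ h => h.elim⟩

theorem isLatFilter_Ici [Lattice α] (a : α) : IsLatFilter (Ici a) :=
  ⟨fun _ _ hx hxy => le_trans hx hxy, fun _ _ hx hy => le_inf hx hy⟩

theorem IsLatFilter.inf_mem_iff [Lattice α] {G : Set α} (hG : IsLatFilter G) {x y : α} :
    x ⊓ y ∈ G ↔ x ∈ G ∧ y ∈ G :=
  ⟨fun h => ⟨hG.1 h inf_le_left, hG.1 h inf_le_right⟩, fun h => hG.2 x y h.1 h.2⟩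

theorem IsLatFilter.inf'_mem [Lattice α] {G : Set α} (hG : IsLatFilter G) {β : Type*}
    {s : Finset β} (hs : s.Nonempty) {f : β → α} (hf : ∀ b ∈ s, f b ∈ G) : s.inf' hs f ∈ G :=
  Finset.inf'_induction hs f (fun a ha b hb => hG.2 a b ha hb) hf

theorem IsLatFilter.sUnion_of_isChain [Lattice α] {c : Set (Set α)}
    (hc : IsChain (· ⊆ ·) c) (hG : ∀ G ∈ c, IsLatFilter G) : IsLatFilter (⋃₀ c) := by
  refine ⟨?_, ?_⟩
  · rintro x y ⟨G, hGc, hx⟩ hxy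
    exact ⟨G, hGc, (hG G hGc).1 hx hxy⟩
  · rintro x y ⟨A, hA, hx⟩ ⟨B, hB, hy⟩
    rcases hc.total hA hB with hAB | hBA
    · exact ⟨B, hB, (hG B hB).2 x y (hAB hx) hy⟩
    · exact ⟨A, hA, (hG A hA).2 x y hx (hBA hy)⟩

theorem IsLatFilter.join [Lattice α] {G G' : Set α} (hG : IsLatFilter G) (hG' : IsLatFilter G') :
    IsLatFilter {z | ∃ u ∈ G, ∃ v ∈ G', u ⊓ v ≤ z} := by
  refine ⟨?_, ?_⟩
  · rintro z w ⟨u, hu, v, hv, huv⟩ hzw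
    exact ⟨u, hu, v, hv, huv.trans hzw⟩
  · rintro z w ⟨u, hu, v, hv, huv⟩ ⟨u', hu', v', hv', huv'⟩
    refine ⟨u ⊓ u', hG.2 _ _ hu hu', v ⊓ v', hG'.2 _ _ hv hv', le_inf ?_ ?_⟩
    · exact (inf_le_inf inf_le_left inf_le_left).trans huv
    · exact (inf_le_inf inf_le_right inf_le_right).trans huv'

theorem IsPrimeUpset.sup_mem_iff [Lattice α] {G : Set α} (hG : IsPrimeUpset G) (hU : IsUpset G)
    {x y : α} : x ⊔ y ∈ G ↔ x ∈ G ∨ y ∈ G :=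
  ⟨hG x y, fun h => h.elim (fun hx => hU hx le_sup_left) (fun hy => hU hy le_sup_right)⟩

theorem IsPrimeUpset.exists_mem_of_sup'_mem [Lattice α] {F : Set α} (hP : IsPrimeUpset F)
    {β : Type*} {s : Finset β} (hs : s.Nonempty) {f : β → α} (hsup : s.sup' hs f ∈ F) :
    ∃ b ∈ s, f b ∈ F := by
  by_contra! h
  exact Finset.sup'_induction (p := (· ∉ F)) hs f (fun a ha b hb hab => (hP a b hab).elim ha hb)
    h hsup

theorem IsPrimeUpset.exists_inf_mem_of_le_sup' [DistribLattice α] {F : Set α}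
    (hP : IsPrimeUpset F) {β : Type*} {s : Finset β} (hs : s.Nonempty) {f : β → α} {a : α}
    (ha : a ∈ F) (hle : a ≤ s.sup' hs f) : ∃ b ∈ s, a ⊓ f b ∈ F := by
  rw [← inf_eq_left.2 hle, Finset.sup'_inf_distrib_left] at ha
  exact hP.exists_mem_of_sup'_mem hs ha

theorem isPrimeUpset_iUnion [Lattice α] {ι : Type*} {G : ι → Set α}
    (hG : ∀ i, IsPrimeUpset (G i)) : IsPrimeUpset (⋃ i, G i) := by
  intro x y hxy
  obtain ⟨i, hi⟩ := mem_iUnion.1 hxy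
  exact (hG i x y hi).imp (fun h => mem_iUnion.2 ⟨i, h⟩) (fun h => mem_iUnion.2 ⟨i, h⟩)

theorem isNFilter_iUnion [Lattice α] {n : ℕ} {ι : Type*} [Fintype ι] [Nonempty ι]
    (hcard : Fintype.card ι ≤ n) {G : ι → Set α} (hG : ∀ i, IsLatFilter (G i)) :
    IsNFilter n (⋃ i, G i) := by
  classical
  refine ⟨fun x y hx hxy => ?_, fun Y hY hsmall => ?_⟩
  · obtain ⟨i, hi⟩ := mem_iUnion.1 hx
    exact mem_iUnion.2 ⟨i, (hG i).1 hi hxy⟩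
  · by_contra hYG
    have hmiss : ∀ i, ∃ y ∈ Y, y ∉ G i := fun i => by
      by_contra! hYi
      exact hYG (mem_iUnion.2 ⟨i, (hG i).inf'_mem hY hYi⟩)
    choose y hyY hyG using hmiss
    obtain ⟨i, hi⟩ := mem_iUnion.1 <| hsmall (Finset.univ.image y)
      (Finset.univ_nonempty.image y) (Finset.image_subset_iff.2 fun i _ => hyY i)
      (Finset.card_image_le.trans hcard)
    exact hyG i ((hG i).1 hi (Finset.inf'_le id (Finset.mem_image_of_mem y (Finset.mem_univ i))))

theorem IsNFilter.card_le_of_pairwise_inf_notMem [DistribLattice α] {n : ℕ} {F : Set α}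
    (hF : IsNFilter n F) (hP : IsPrimeUpset F) (hn : 1 ≤ n) {ι : Type*} [Fintype ι]
    (b : ι → α) (hb : ∀ i, b i ∈ F) (hbb : Pairwise fun i j => b i ⊓ b j ∉ F) :
    Fintype.card ι ≤ n := by
  classical
  by_contra! hcard
  have herase (i : ι) : (Finset.univ.erase i).Nonempty := by
    rw [← Finset.card_pos, Finset.card_erase_of_mem (Finset.mem_univ i), Finset.card_univ]
    omega
  have hι : Nonempty ι := Fintype.card_pos_iff.1 (by omega)
  set c : ι → α := fun i => (Finset.univ.erase i).sup' (herase i) b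
  set Y := Finset.univ.image c
  have hsmall (X : Finset α) (hX : X.Nonempty) (hXY : X ⊆ Y) (hXn : X.card ≤ n) :
      X.inf' hX id ∈ F := by
    have hpre : ∀ x ∈ X, ∃ i, c i = x := fun x hx => by simpa [Y] using hXY hx
    choose! φ hφ using hpre
    obtain ⟨k, -, hk⟩ := Finset.exists_mem_notMem_of_card_lt_card (s := X.image φ)
      (t := Finset.univ) (Finset.card_image_le.trans_lt (hXn.trans_lt (by simpa using hcard)))
    -- `b k` lies below `c i` for every `i ≠ k`, and `X` only contains such `c i`
    refine hF.1 (hb k) (Finset.le_inf' _ _ fun x hx => ?_)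
    rw [← hφ x hx]
    refine Finset.le_sup' b (Finset.mem_erase.2 ⟨fun hkx => hk ?_, Finset.mem_univ k⟩)
    exact hkx ▸ Finset.mem_image_of_mem φ hx
  have hm : Y.inf' (Finset.univ_nonempty.image c) id ∈ F := hF.2 Y _ hsmall
  have hmc (i : ι) : Y.inf' (Finset.univ_nonempty.image c) id ≤ c i :=
    Finset.inf'_le id (Finset.mem_image_of_mem c (Finset.mem_univ i))
  obtain ⟨i₀⟩ := hι
  obtain ⟨j, -, hj⟩ := hP.exists_inf_mem_of_le_sup' (herase i₀) hm (hmc i₀)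
  obtain ⟨k, hk, hjk⟩ := hP.exists_inf_mem_of_le_sup' (herase j) hj (inf_le_left.trans (hmc j))
  exact hbb (Finset.ne_of_mem_erase hk).symm (hF.1 hjk (inf_le_inf_right _ inf_le_right))

theorem exists_maximal_filter_subset_of_mem [Lattice α] {F : Set α} (hU : IsUpset F) {x : α}
    (hx : x ∈ F) : ∃ G, x ∈ G ∧ Maximal (fun G => IsLatFilter G ∧ G ⊆ F) G := by
  obtain ⟨G, hxG, hG⟩ := zorn_subset_nonempty {G | IsLatFilter G ∧ G ⊆ F}
    (fun c hc hchain _ => ⟨⋃₀ c, ⟨.sUnion_of_isChain hchain fun G hG => (hc hG).1,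
      sUnion_subset fun G hG => (hc hG).2⟩, fun _ => subset_sUnion_of_mem⟩)
    (Ici x) ⟨isLatFilter_Ici x, fun _ hy => hU hx hy⟩
  exact ⟨G, hxG self_mem_Ici, hG⟩

theorem Maximal.exists_inf_notMem [Lattice α] {F G G' : Set α} (hU : IsUpset F)
    (hG : Maximal (fun G => IsLatFilter G ∧ G ⊆ F) G) (hG' : IsLatFilter G')
    (hne : G.Nonempty) (hne' : G'.Nonempty) (hG'G : ¬ G' ⊆ G) : ∃ u ∈ G, ∃ v ∈ G', u ⊓ v ∉ F := by
  by_contra! hsep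
  obtain ⟨g, hg⟩ := hne
  obtain ⟨g', hg'⟩ := hne'
  have hjoin : G ⊆ {z | ∃ u ∈ G, ∃ v ∈ G', u ⊓ v ≤ z} := fun u hu => ⟨u, hu, g', hg', inf_le_left⟩
  have hjoinG := hG.2 ⟨hG.1.1.join hG', fun z ⟨u, hu, v, hv, huv⟩ => hU (hsep u hu v hv) huv⟩ hjoin
  exact hG'G fun v hv => hjoinG ⟨g, hg, v, hv, inf_le_right⟩

theorem Maximal.isPrimeUpset [DistribLattice α] {F G : Set α} (hU : IsUpset F)
    (hP : IsPrimeUpset F) (hG : Maximal (fun G => IsLatFilter G ∧ G ⊆ F) G) : IsPrimeUpset G := by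
  intro x y hxy
  by_contra! hxyG
  have hsep (a : α) (ha : a ∉ G) : ∃ g ∈ G, g ⊓ a ∉ F := by
    obtain ⟨u, hu, v, hv, huv⟩ := hG.exists_inf_notMem hU (isLatFilter_Ici a) ⟨_, hxy⟩
      ⟨a, self_mem_Ici⟩ fun h => ha (h self_mem_Ici)
    exact ⟨u, hu, fun h => huv (hU h (inf_le_inf_left u hv))⟩
  obtain ⟨g, hg, hgx⟩ := hsep x hxyG.1
  obtain ⟨g', hg', hgy⟩ := hsep y hxyG.2
  have hmem : (g ⊓ g') ⊓ x ⊔ (g ⊓ g') ⊓ y ∈ F := by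
    rw [← inf_sup_left]
    exact hG.1.2 (hG.1.1.2 _ _ (hG.1.1.2 _ _ hg hg') hxy)
  rcases hP _ _ hmem with h | h
  · exact hgx (hU h (inf_le_inf_right x inf_le_left))
  · exact hgy (hU h (inf_le_inf_right y inf_le_right))

theorem exists_pairwise_inf_notMem [Lattice α] {F : Set α} (hU : IsUpset F) {ι : Type*}
    [Fintype ι] {G : ι → Set α} (hG : ∀ i, IsLatFilter (G i)) (hne : ∀ i, (G i).Nonempty)
    (hsep : Pairwise fun i j => ∃ u ∈ G i, ∃ v ∈ G j, u ⊓ v ∉ F) :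
    ∃ b : ι → α, (∀ i, b i ∈ G i) ∧ Pairwise fun i j => b i ⊓ b j ∉ F := by
  have hsep' (i j : ι) : ∃ u ∈ G i, ∃ v ∈ G j, i ≠ j → u ⊓ v ∉ F := by
    by_cases hij : i = j
    · obtain ⟨g, hg⟩ := hne i
      exact ⟨g, hg, g, hij ▸ hg, fun h => (h hij).elim⟩
    · obtain ⟨u, hu, v, hv, huv⟩ := hsep hij
      exact ⟨u, hu, v, hv, fun _ => huv⟩
  choose u hu v hv huv using hsep'
  refine ⟨fun i => Finset.univ.inf' ⟨i, Finset.mem_univ i⟩ fun j => u i j ⊓ v j i,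
    fun i => (hG i).inf'_mem _ fun j _ => (hG i).2 _ _ (hu i j) (hv j i), fun i j hij hF => ?_⟩
  refine huv i j hij (hU hF (le_inf ?_ ?_))
  · exact inf_le_left.trans ((Finset.inf'_le _ (Finset.mem_univ j)).trans inf_le_left)
  · exact inf_le_right.trans ((Finset.inf'_le _ (Finset.mem_univ i)).trans inf_le_right)

theorem Finset.exists_fin_cover {β : Type*} (t : Finset β) {n : ℕ} (ht : t.card ≤ n) (d : β) :
    ∃ f : Fin n → β, (∀ i, f i = d ∨ f i ∈ t) ∧ ∀ b ∈ t, ∃ i, f i = b := by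
  classical
  obtain ⟨e⟩ := Function.Embedding.nonempty_of_card_le (α := t) (β := Fin n) (by simpa using ht)
  refine ⟨Function.extend e (↑) fun _ => d, fun i => ?_,
    fun b hb => ⟨e ⟨b, hb⟩, e.injective.extend_apply _ _ _⟩⟩
  by_cases hi : ∃ a, e a = i
  · obtain ⟨a, rfl⟩ := hi
    exact .inr (e.injective.extend_apply _ _ a ▸ a.2)
  · exact .inl (Function.extend_apply' _ _ _ hi)

theorem IsNFilter.exists_eq_iUnion_primeFilters [DistribLattice α] {n : ℕ} {F : Set α}
    (hF : IsNFilter n F) (hP : IsPrimeUpset F) (hn : 1 ≤ n) :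
    ∃ G : Fin n → Set α, (∀ i, IsLatFilter (G i) ∧ IsPrimeUpset (G i)) ∧ F = ⋃ i, G i := by
  set M := {G : Set α | G.Nonempty ∧ Maximal (fun G => IsLatFilter G ∧ G ⊆ F) G}
  have hcard (t : Finset (Set α)) (ht : ↑t ⊆ M) : t.card ≤ n := by
    have hsep : Pairwise fun G G' : t => ∃ u ∈ (G : Set α), ∃ v ∈ (G' : Set α), u ⊓ v ∉ F := by
      intro G G' hGG'
      obtain ⟨hGne, hG⟩ := ht G.2
      obtain ⟨hG'ne, hG'⟩ := ht G'.2
      exact hG.exists_inf_notMem hF.1 hG'.1.1 hGne hG'ne fun hsub =>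
        hGG' (Subtype.ext (hG'.eq_of_subset hG.1 hsub).symm)
    obtain ⟨b, hbG, hbb⟩ :=
      exists_pairwise_inf_notMem hF.1 (fun G => (ht G.2).2.1.1) (fun G => (ht G.2).1) hsep
    simpa using hF.card_le_of_pairwise_inf_notMem hP hn b (fun G => (ht G.2).2.1.2 (hbG G)) hbb
  have hfin : M.Finite := by
    by_contra hinf
    obtain ⟨t, htM, htn⟩ := Set.Infinite.exists_subset_card_eq hinf (n + 1)
    have := hcard t htM
    omega
  obtain ⟨G, hGM, hMG⟩ := hfin.toFinset.exists_fin_cover (hcard _ (by simp)) ∅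
  have hG (i : Fin n) : (IsLatFilter (G i) ∧ IsPrimeUpset (G i)) ∧ G i ⊆ F := by
    rcases hGM i with h | h
    · exact h ▸ ⟨⟨isLatFilter_empty, fun _ _ h => h.elim⟩, empty_subset F⟩
    · obtain ⟨-, hGi⟩ := hfin.mem_toFinset.1 h
      exact ⟨⟨hGi.1.1, hGi.isPrimeUpset hF.1 hP⟩, hGi.1.2⟩
  refine ⟨G, fun i => (hG i).1, subset_antisymm (fun x hx => ?_) (iUnion_subset fun i => (hG i).2)⟩
  obtain ⟨G', hxG', hG'⟩ := exists_maximal_filter_subset_of_mem hF.1 hx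
  obtain ⟨i, rfl⟩ := hMG G' (hfin.mem_toFinset.2 ⟨⟨x, hxG'⟩, hG'⟩)
  exact mem_iUnion.2 ⟨i, hxG'⟩

end Lattice

section DeMorgan

variable {L : Type*} [DeMorgan L]

theorem DeMorgan.dneg_inf (x y : L) : ∼(x ⊓ y) = ∼x ⊔ ∼y := by
  rw [← DeMorgan.dneg_dneg (∼x ⊔ ∼y), DeMorgan.dneg_sup, DeMorgan.dneg_dneg, DeMorgan.dneg_dneg]

theorem DeMorgan.dneg_bool_prod (p : Bool × Bool) : ∼p = (!p.2, !p.1) := rfl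

def IsConsistentPrimeFilter (G : Set L) : Prop :=
  IsLatFilter G ∧ IsPrimeUpset G ∧ ∀ x ∈ G, ∼x ∉ G

theorem isConsistentUpset_iUnion [Nonempty L] {ι : Type*} {G : ι → Set L}
    (hG : ∀ i, IsConsistentPrimeFilter (G i)) : IsConsistentUpset (⋃ i, G i) := by
  have hcontra (i : ι) (x : L) : x ⊓ ∼x ∉ G i := fun h =>
    (hG i).2.2 x ((hG i).1.1 h inf_le_left) ((hG i).1.1 h inf_le_right)
  refine ⟨fun x y hxy => ?_, fun huniv => ?_⟩
  · obtain ⟨i, hi⟩ := mem_iUnion.1 hxy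
    exact mem_iUnion.2 ⟨i, ((hG i).2.1 _ _ hi).resolve_left (hcontra i x)⟩
  · obtain ⟨x⟩ := ‹Nonempty L›
    obtain ⟨i, hi⟩ := mem_iUnion.1 (huniv ▸ mem_univ (x ⊓ ∼x))
    exact hcontra i x hi

theorem IsConsistentUpset.dneg_notMem {F G : Set L} (hF : IsConsistentUpset F) (hU : IsUpset F)
    (hG : IsLatFilter G) (hGF : G ⊆ F) {x : L} (hx : x ∈ G) : ∼x ∉ G := fun hnx =>
  hF.2 (eq_univ_of_forall fun y => hF.1 x y (hU (hGF (hG.2 x _ hx hnx)) le_sup_left))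

open Classical in
noncomputable def primeFilterHom (G : Set L) (x : L) : Bool × Bool :=
  (decide (x ∈ G), !decide (∼x ∈ G))

@[simp]
theorem primeFilterHom_fst_eq_true {G : Set L} {x : L} :
    (primeFilterHom G x).1 = true ↔ x ∈ G := by
  simp [primeFilterHom]

@[simp]
theorem primeFilterHom_snd_eq_true {G : Set L} {x : L} :
    (primeFilterHom G x).2 = true ↔ ∼x ∉ G := by
  simp [primeFilterHom]

theorem isDMHom_primeFilterHom {G : Set L} (hG : IsLatFilter G) (hP : IsPrimeUpset G) :
    IsDMHom (primeFilterHom G) := by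
  refine ⟨fun x y => ?_, fun x y => ?_, fun x => ?_⟩ <;>
    refine Prod.ext (Bool.eq_iff_iff.2 ?_) (Bool.eq_iff_iff.2 ?_) <;>
    simp [primeFilterHom, DeMorgan.dneg_inf, DeMorgan.dneg_sup, DeMorgan.dneg_dneg,
      DeMorgan.dneg_bool_prod, hG.inf_mem_iff, hP.sup_mem_iff hG.1, imp_iff_not_or]

theorem IsDMHom.pi_iff {ι : Type*} {h : L → ι → Bool × Bool} :
    IsDMHom h ↔ ∀ i, IsDMHom fun x => h x i :=
  ⟨fun ⟨hinf, hsup, hneg⟩ i => ⟨fun x y => congrFun (hinf x y) i,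
      fun x y => congrFun (hsup x y) i, fun x => congrFun (hneg x) i⟩,
    fun hh => ⟨fun x y => funext fun i => (hh i).1 x y, fun x y => funext fun i => (hh i).2.1 x y,
      fun x => funext fun i => (hh i).2.2 x⟩⟩

theorem IsDMHom.isConsistentPrimeFilter {h : L → Bool × Bool} (hh : IsDMHom h)
    (hK : ∀ x, (h x).1 = true → (h x).2 = true) : IsConsistentPrimeFilter {x | (h x).1 = true} := by
  refine ⟨⟨fun x y hx hxy => ?_, fun x y hx hy => ?_⟩, fun x y hxy => ?_, fun x hx hnx => ?_⟩
  all_goals simp only [mem_ofPred_eq] at *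
  · rw [← sup_eq_right.2 hxy, hh.2.1]
    simp [hx]
  · rw [hh.1]
    simp [hx, hy]
  · rw [hh.2.1] at hxy
    simpa using hxy
  · rw [hh.2.2, DeMorgan.dneg_bool_prod, hK x hx] at hnx
    exact Bool.false_ne_true hnx

end DeMorgan

theorem statement5_general {L : Type*} [DeMorgan L] [Nonempty L] (n : ℕ) (hn : 1 ≤ n)
    (F : Set L) :
    (IsConsistentUpset F ∧ IsPrimeUpset F ∧ IsNFilter n F) ↔
      ∃ h : L → (Fin n → Bool × Bool), IsDMHom h ∧
        (∀ (x : L) (i : Fin n), (h x i).1 = true → (h x i).2 = true) ∧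
        F = {x : L | ∃ i : Fin n, (h x i).1 = true} := by
  constructor
  · rintro ⟨hcons, hP, hN⟩
    obtain ⟨G, hG, rfl⟩ := hN.exists_eq_iUnion_primeFilters hP hn
    refine ⟨fun x i => primeFilterHom (G i) x,
      IsDMHom.pi_iff.2 fun i => isDMHom_primeFilterHom (hG i).1 (hG i).2, fun x i hx => ?_, ?_⟩
    · rw [primeFilterHom_fst_eq_true] at hx
      exact primeFilterHom_snd_eq_true.2 <| hcons.dneg_notMem hN.1 (hG i).1 (subset_iUnion G i) hx
    · ext x
      simp
  · rintro ⟨h, hh, hK, rfl⟩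
    have hG (i : Fin n) : IsConsistentPrimeFilter {x | (h x i).1 = true} :=
      (IsDMHom.pi_iff.1 hh i).isConsistentPrimeFilter (hK · i)
    have hF : {x | ∃ i, (h x i).1 = true} = ⋃ i, {x | (h x i).1 = true} := by
      ext
      simp
    have : Nonempty (Fin n) := Fin.pos_iff_nonempty.1 hn
    rw [hF]
    exact ⟨isConsistentUpset_iUnion hG, isPrimeUpset_iUnion fun i => (hG i).2.1,
      isNFilter_iUnion (Fintype.card_fin n).le fun i => (hG i).1⟩

/-- consistent prime `n`-filters are precisely the preimages of the designated
set of `DMₙ` under De Morgan homomorphisms landing in the subalgebra `Kₙ`. -/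
theorem statement5 {L : Type*} [DeMorgan L] [Nonempty L] (n : ℕ) (hn : 1 ≤ n)
    (F : Set L) (hF : IsUpset F) :
    (IsConsistentUpset F ∧ IsPrimeUpset F ∧ IsNFilter n F) ↔
      ∃ h : L → (Fin n → Bool × Bool), IsDMHom h ∧
        (∀ (x : L) (i : Fin n), (h x i).1 = true → (h x i).2 = true) ∧
        F = {x : L | ∃ i : Fin n, (h x i).1 = true} :=
  statement5_general n hn F
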